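/- arXiv:1808.00765 — 5 statements merged into one kernel-verified Lean document; each statement's English description precedes it below -/
import Mathlib

section
/- Let X be a second countable space, U ⊆ X open, σ : U → X a local homeomorphism, and μ a Borel measure on X. If E ⊆ U is Borel and E = ⊔ᵢ Eᵢ = ⊔ⱼ Fⱼ are two countable partitions into Borel sets on each of which σ is injective, then ∑ᵢ μ(σ(Eᵢ)) = ∑ⱼ μ(σ(Fⱼ)). Hence the measure μ⊙σ defined by μ⊙σ(E) := ∑ᵢ μ(σ(Eᵢ)) is well defined. -/
/-!
Both sums equal the double sum `∑ᵢ ∑ⱼ μ(σ(Eᵢ ∩ Fⱼ))`, which may be reordered since its terms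
are nonnegative. Indeed, as `σ` is injective on `Eᵢ`, the sets `σ(Eᵢ ∩ Fⱼ)` are pairwise disjoint
with union `σ(Eᵢ)`; they are measurable because, by second countability, `σ` restricted to a
subset of `U` is a countable union of open embeddings.
-/

open MeasureTheory Set Topology Function

theorem OpenPartialHomeomorph.measurableSet_image_inter_source {X Y : Type*}
    [TopologicalSpace X] [MeasurableSpace X] [BorelSpace X]
    [TopologicalSpace Y] [MeasurableSpace Y] [BorelSpace Y]
    (e : OpenPartialHomeomorph X Y) {s : Set X} (hs : MeasurableSet s) :
    MeasurableSet (e '' (s ∩ e.source)) := by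
  rw [← image_domRestrict]
  exact e.isOpenEmbedding_restrict.measurableEmbedding.measurableSet_image.2
    (hs.preimage measurable_subtype_coe)

theorem MeasurableSet.image_of_forall_nhdsWithin {X Y : Type*} [TopologicalSpace X]
    [SecondCountableTopology X] [MeasurableSpace Y] {f : X → Y} {s : Set X}
    (h : ∀ x ∈ s, ∃ V ∈ 𝓝[s] x, MeasurableSet (f '' (s ∩ V))) : MeasurableSet (f '' s) := by
  choose! V hV hV_meas using h
  obtain ⟨t, hts, htc, hst⟩ := TopologicalSpace.countable_cover_nhdsWithin hV
  have hcover : f '' s = ⋃ x ∈ t, f '' (s ∩ V x) := by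
    rw [← image_iUnion₂, ← inter_iUnion₂, inter_eq_left.2 hst]
  rw [hcover]
  exact .biUnion htc fun x hx => hV_meas x (hts hx)

theorem IsLocalHomeomorphOn.measurableSet_image {X Y : Type*}
    [TopologicalSpace X] [SecondCountableTopology X] [MeasurableSpace X] [BorelSpace X]
    [TopologicalSpace Y] [MeasurableSpace Y] [BorelSpace Y]
    {f : X → Y} {U : Set X} (hf : IsLocalHomeomorphOn f U)
    {s : Set X} (hs : MeasurableSet s) (hsU : s ⊆ U) : MeasurableSet (f '' s) := by
  refine .image_of_forall_nhdsWithin fun x hx => ?_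
  obtain ⟨e, hxe, rfl⟩ := hf x (hsU hx)
  exact ⟨e.source, mem_nhdsWithin_of_mem_nhds (e.open_source.mem_nhds hxe),
    e.measurableSet_image_inter_source hs⟩

theorem measure_image_eq_tsum_measure_image_inter {α β ι : Type*} [MeasurableSpace β]
    [Countable ι] (μ : Measure β) {f : α → β} {s : Set α} {t : ι → Set α} (hf : InjOn f s)
    (ht : Pairwise (Disjoint on t)) (hst : s ⊆ ⋃ j, t j)
    (hmeas : ∀ j, MeasurableSet (f '' (s ∩ t j))) :
    μ (f '' s) = ∑' j, μ (f '' (s ∩ t j)) := by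
  have hdisj : Pairwise (Disjoint on fun j => f '' (s ∩ t j)) := fun i j hij => by
    rw [onFun, disjoint_iff_inter_eq_empty,
      ← hf.image_inter inter_subset_left inter_subset_left, image_eq_empty]
    exact ((ht hij).mono inter_subset_right inter_subset_right).inter_eq
  rw [← measure_iUnion hdisj hmeas, ← image_iUnion, ← inter_iUnion, inter_eq_left.2 hst]

theorem IsLocalHomeomorphOn.tsum_measure_image_eq_tsum_tsum_inter {X Y ι κ : Type*}
    [TopologicalSpace X] [SecondCountableTopology X] [MeasurableSpace X] [BorelSpace X]
    [TopologicalSpace Y] [MeasurableSpace Y] [BorelSpace Y] [Countable κ]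
    {f : X → Y} {U : Set X} (hf : IsLocalHomeomorphOn f U) (μ : Measure Y)
    {s : ι → Set X} {t : κ → Set X} (hs : ∀ i, MeasurableSet (s i)) (ht : ∀ j, MeasurableSet (t j))
    (hsU : ⋃ i, s i ⊆ U) (hf_inj : ∀ i, InjOn f (s i)) (ht_disj : Pairwise (Disjoint on t))
    (hst : ⋃ i, s i ⊆ ⋃ j, t j) :
    ∑' i, μ (f '' s i) = ∑' i, ∑' j, μ (f '' (s i ∩ t j)) :=
  tsum_congr fun i => measure_image_eq_tsum_measure_image_inter μ (hf_inj i) ht_disj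
    ((subset_iUnion s i).trans hst) fun j => hf.measurableSet_image ((hs i).inter (ht j))
      (inter_subset_left.trans ((subset_iUnion s i).trans hsU))

theorem stmt4_general {X : Type*} [TopologicalSpace X]
    [SecondCountableTopology X] [MeasurableSpace X] [BorelSpace X]
    (U : Set X) (σ : X → X) (hσ : IsLocalHomeomorphOn σ U)
    (μ : Measure X) (E : Set X) (hEU : E ⊆ U)
    (Ei Fj : ℕ → Set X)
    (hEim : ∀ i, MeasurableSet (Ei i)) (hFjm : ∀ j, MeasurableSet (Fj j))
    (hEid : Pairwise fun i j => Disjoint (Ei i) (Ei j))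
    (hFjd : Pairwise fun i j => Disjoint (Fj i) (Fj j))
    (hEiU : (⋃ i, Ei i) = E) (hFjU : (⋃ j, Fj j) = E)
    (hEiInj : ∀ i, Set.InjOn σ (Ei i)) (hFjInj : ∀ j, Set.InjOn σ (Fj j)) :
    ∑' i, μ (σ '' Ei i) = ∑' j, μ (σ '' Fj j) := by
  rw [hσ.tsum_measure_image_eq_tsum_tsum_inter μ hEim hFjm (hEiU ▸ hEU) hEiInj hFjd
      (hEiU.trans hFjU.symm).subset,
    hσ.tsum_measure_image_eq_tsum_tsum_inter μ hFjm hEim (hFjU ▸ hEU) hFjInj hEid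
      (hFjU.trans hEiU.symm).subset,
    ENNReal.tsum_comm]
  simp_rw [inter_comm]

/-- Well-definedness of the measure `μ ⊙ σ`: if `X` is locally compact Hausdorff second
countable, `U ⊆ X` is open, `σ` is a local homeomorphism on `U` and `μ` a Borel measure,
then any two countable Borel partitions of a Borel set `E ⊆ U` into pieces on which `σ`
is injective give the same value `∑ᵢ μ(σ(Eᵢ)) = ∑ⱼ μ(σ(Fⱼ))`. -/
theorem stmt4 {X : Type*} [TopologicalSpace X] [LocallyCompactSpace X] [T2Space X]
    [SecondCountableTopology X] [MeasurableSpace X] [BorelSpace X]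
    (U : Set X) (hU : IsOpen U) (σ : X → X) (hσ : IsLocalHomeomorphOn σ U)
    (μ : Measure X) (E : Set X) (hEU : E ⊆ U) (hE : MeasurableSet E)
    (Ei Fj : ℕ → Set X)
    (hEim : ∀ i, MeasurableSet (Ei i)) (hFjm : ∀ j, MeasurableSet (Fj j))
    (hEid : Pairwise fun i j => Disjoint (Ei i) (Ei j))
    (hFjd : Pairwise fun i j => Disjoint (Fj i) (Fj j))
    (hEiU : (⋃ i, Ei i) = E) (hFjU : (⋃ j, Fj j) = E)
    (hEiInj : ∀ i, Set.InjOn σ (Ei i)) (hFjInj : ∀ j, Set.InjOn σ (Fj j)) :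
    ∑' i, μ (σ '' Ei i) = ∑' j, μ (σ '' Fj j) :=
  stmt4_general U σ hσ μ E hEU Ei Fj hEim hFjm hEid hFjd hEiU hFjU hEiInj hFjInj
end

section
/- Let X be locally compact Hausdorff second countable, U ⊆ X open, σ : U → X a local homeomorphism, F : U → ℝ continuous, β > 0, and μ a finite Borel measure on X. If μ is Denker–Urbański conformal (μ(σ(A)) = ∫_A e^{βF} dμ for all measurable A ⊆ U with σ|_A injective), then μ is Sarig-conformal: μ⊙σ(E) = ∫_E e^{βF} dμ for all measurable E ⊆ U. -/
open MeasureTheory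

/-- Denker–Urbański conformality implies Sarig-conformality: if
`μ(σ(A)) = ∫⁻_A e^{βF} dμ` for every Borel `A ⊆ U` with `σ|_A` injective, then for
every Borel `E ⊆ U`, `μ⊙σ(E) = ∫⁻_E e^{βF} dμ`, where `μ⊙σ(E) = ∑ᵢ μ(σ(Eᵢ))` for any
countable Borel partition of `E` into pieces on which `σ` is injective. -/
theorem stmt6 {X : Type*} [TopologicalSpace X] [LocallyCompactSpace X] [T2Space X]
    [SecondCountableTopology X] [MeasurableSpace X] [BorelSpace X]
    (U : Set X) (hU : IsOpen U) (σ : X → X) (hσ : IsLocalHomeomorphOn σ U)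
    (F : X → ℝ) (hF : ContinuousOn F U) (β : ℝ) (hβ : 0 < β)
    (μ : Measure X) (hfin : IsFiniteMeasure μ)
    (hDU : ∀ A : Set X, A ⊆ U → MeasurableSet A → Set.InjOn σ A →
      μ (σ '' A) = ∫⁻ x in A, ENNReal.ofReal (Real.exp (β * F x)) ∂μ) :
    ∀ E : Set X, E ⊆ U → MeasurableSet E →
      ∀ Ei : ℕ → Set X, (∀ i, MeasurableSet (Ei i)) →
        (Pairwise fun i j => Disjoint (Ei i) (Ei j)) → (⋃ i, Ei i) = E →
        (∀ i, Set.InjOn σ (Ei i)) →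
        ∑' i, μ (σ '' Ei i) = ∫⁻ x in E, ENNReal.ofReal (Real.exp (β * F x)) ∂μ := by
  intro E hEU hE Ei hEi hdisj hUnion hinj
  have key : ∀ i, μ (σ '' Ei i) = ∫⁻ x in Ei i, ENNReal.ofReal (Real.exp (β * F x)) ∂μ := by
    intro i
    exact hDU _ (fun x hx => hEU (hUnion ▸ Set.mem_iUnion.2 ⟨i, hx⟩)) (hEi i) (hinj i)
  simp_rw [key]
  rw [← hUnion, lintegral_iUnion hEi hdisj]
end

section
/- Let X be locally compact Hausdorff second countable, U ⊆ X open, σ : U → X a local homeomorphism with σ finite-to-one on fibers appearing in compactly supported sums, F : U → ℝ continuous, β > 0, and μ a finite Borel measure on X. If μ is an eigenmeasure of the Ruelle transformation, i.e., ∫_X ∑_{σ(y)=x} e^{−βF(y)} f(y) dμ(x) = ∫_U f dμ for all f ∈ C_c(U), then μ is Denker–Urbański conformal: μ(σ(A)) = ∫_A e^{βF} dμ for every Borel set A ⊆ U on which σ is injective. -/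
/-!
Near a point of `U`, `σ` is a homeomorphism `e` from a small open set `V` onto `e '' V`. Testing
the eigenmeasure identity against `h · e^{βF}` with `h` supported in `V`, the Ruelle sum at `x`
has the single term `h (e⁻¹ x)`, so `∫ h ∘ e⁻¹ dμ|_{e '' V} = ∫_V h e^{βF} dμ`. By the uniqueness
part of the Riesz–Markov–Kakutani theorem the push-forward of `μ|_{e '' V}` under `e⁻¹` is
`e^{βF} μ|_V`, which is conformality for sets inside `V`. A countable cover of `U` by such `V`,
together with injectivity of `σ` on `A`, glues these local identities.
-/

open MeasureTheory Set Function

theorem MeasureTheory.Measure.ext_of_integral_eq_of_tsupport_subset {X : Type*}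
    [TopologicalSpace X] [LocallyCompactSpace X] [T2Space X] [SecondCountableTopology X]
    [MeasurableSpace X] [BorelSpace X] {V : Set X} (hV : IsOpen V)
    {ρ κ : Measure X} [IsFiniteMeasure ρ] [IsFiniteMeasure κ] (hρ : ρ Vᶜ = 0) (hκ : κ Vᶜ = 0)
    (h : ∀ f : X → ℝ, Continuous f → HasCompactSupport f → tsupport f ⊆ V →
      ∫ x, f x ∂ρ = ∫ x, f x ∂κ) :
    ρ = κ := by
  have := hV.locallyCompactSpace
  have hemb := MeasurableEmbedding.subtype_coe hV.measurableSet
  have hmap : ∀ ν : Measure X, ν Vᶜ = 0 → (ν.comap Subtype.val).map Subtype.val = ν := fun ν hν ↦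
    (map_comap_subtype_coe hV.measurableSet ν).trans
      (Measure.restrict_eq_self_of_ae_mem (mem_ae_iff.2 hν))
  suffices ρ.comap Subtype.val = κ.comap (Subtype.val : V → X) by
    rw [← hmap ρ hρ, ← hmap κ hκ, this]
  refine Measure.ext_of_integral_eq_on_compactlySupported fun g ↦ ?_
  have hg := g.hasCompactSupport
  have := h (Subtype.val.extend g 0) (hg.continuous_extend_zero hV g.continuous)
    (hg.extend_zero continuous_subtype_val)
    ((hg.tsupport_extend_zero_subset continuous_subtype_val).trans (Subtype.coe_image_subset _ _))
  rw [← hmap ρ hρ, ← hmap κ hκ, hemb.integral_map, hemb.integral_map] at this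
  simpa only [Subtype.val_injective.extend_apply] using this

theorem measure_image_eq_of_locally_eq {X Y : Type*} [TopologicalSpace X]
    [SecondCountableTopology X] [MeasurableSpace X] [OpensMeasurableSpace X] [MeasurableSpace Y]
    {σ : X → Y} {μ : Measure Y} {ν : Measure X} {A : Set X} (hA : MeasurableSet A)
    (hσA : InjOn σ A)
    (hloc : ∀ x ∈ A, ∃ V, IsOpen V ∧ x ∈ V ∧
      ∀ B ⊆ V, MeasurableSet B → MeasurableSet (σ '' B) ∧ μ (σ '' B) = ν B) :
    μ (σ '' A) = ν A := by
  rcases A.eq_empty_or_nonempty with rfl | ⟨x₀, hx₀⟩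
  · simp
  choose! V hVo hxV hVB using hloc
  have : Nonempty A := ⟨⟨x₀, hx₀⟩⟩
  obtain ⟨c, hc⟩ := (HereditarilyLindelofSpace.isLindelof A).indexed_countable_subcover
    (fun x : A ↦ V x) (fun x ↦ hVo x x.2) fun x hx ↦ mem_iUnion.2 ⟨⟨x, hx⟩, hxV x hx⟩
  set B : ℕ → Set X := disjointed fun n ↦ A ∩ V (c n)
  have hBA : ∀ n, B n ⊆ A := fun n ↦ (disjointed_subset _ n).trans inter_subset_left
  have hBV : ∀ n, B n ⊆ V (c n) := fun n ↦ (disjointed_subset _ n).trans inter_subset_right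
  have hB : ∀ n, MeasurableSet (B n) :=
    MeasurableSet.disjointed fun n ↦ hA.inter (hVo _ (c n).2).measurableSet
  have hAB : ⋃ n, B n = A := by
    rw [iUnion_disjointed, ← inter_iUnion, inter_eq_left.2 hc]
  have hσB : Pairwise (Disjoint on fun n ↦ σ '' B n) := fun m n hmn ↦
    (disjoint_disjointed _ hmn).image hσA (hBA m) (hBA n)
  calc μ (σ '' A) = ∑' n, μ (σ '' B n) := by
        rw [← hAB, image_iUnion, measure_iUnion hσB fun n ↦ (hVB _ (c n).2 _ (hBV n) (hB n)).1]
    _ = ∑' n, ν (B n) := tsum_congr fun n ↦ (hVB _ (c n).2 _ (hBV n) (hB n)).2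
    _ = ν A := by rw [← measure_iUnion (disjoint_disjointed _) hB, hAB]

namespace OpenPartialHomeomorph

section Measure

variable {X Y : Type*} [TopologicalSpace X] [TopologicalSpace Y] [MeasurableSpace X]
    [BorelSpace X] [MeasurableSpace Y] [BorelSpace Y] (e : OpenPartialHomeomorph X Y)

theorem measurableSet_image {A : Set X} (hA : MeasurableSet A) (hAs : A ⊆ e.source) :
    MeasurableSet (e '' A) := by
  have hAs' : Subtype.val '' (Subtype.val ⁻¹' A : Set e.source) = A := by
    rw [Subtype.image_preimage_coe, inter_eq_right.2 hAs]
  rw [← hAs', ← image_comp]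
  exact e.isOpenEmbedding_restrict.measurableEmbedding.measurableSet_image.2
    (measurable_subtype_coe hA)

theorem aemeasurable_symm_restrict_image (μ : Measure Y) {V : Set X} (hV : MeasurableSet V)
    (hVs : V ⊆ e.source) : AEMeasurable e.symm (μ.restrict (e '' V)) :=
  (e.continuousOn_symm.mono (e.image_source_eq_target ▸ image_mono hVs)).aemeasurable
    (e.measurableSet_image hV hVs)

theorem map_symm_restrict_image_apply (μ : Measure Y) {V B : Set X} (hV : MeasurableSet V)
    (hVs : V ⊆ e.source) (hB : MeasurableSet B) (hBV : B ⊆ V) :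
    (μ.restrict (e '' V)).map e.symm B = μ (e '' B) := by
  rw [Measure.map_apply_of_aemeasurable (e.aemeasurable_symm_restrict_image μ hV hVs) hB,
    Measure.restrict_apply' (e.measurableSet_image hV hVs),
    e.image_eq_target_inter_inv_preimage hVs,
    e.image_eq_target_inter_inv_preimage (hBV.trans hVs)]
  congr 1
  ext x
  simp only [mem_inter_iff, mem_preimage]
  exact ⟨fun h ↦ ⟨h.2.1, h.1⟩, fun h ↦ ⟨h.2, h.1, hBV h.2⟩⟩

end Measure

theorem tsum_preimage_inter_eq_indicator {X Y : Type*} [TopologicalSpace X] [TopologicalSpace Y]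
    (e : OpenPartialHomeomorph X Y) {U V : Set X} (hVs : V ⊆ e.source) (hVU : V ⊆ U)
    {g : X → ℝ} (hg : support g ⊆ V) (x : Y) :
    ∑' y : ↥(e ⁻¹' {x} ∩ U), g y = (e '' V).indicator (g ∘ e.symm) x := by
  by_cases hx : x ∈ e '' V
  · obtain ⟨y₀, hy₀, rfl⟩ := hx
    rw [indicator_of_mem (mem_image_of_mem e hy₀), comp_apply, e.left_inv (hVs hy₀)]
    refine tsum_eq_single (⟨y₀, rfl, hVU hy₀⟩ : ↥(e ⁻¹' {e y₀} ∩ U)) fun y hne ↦ ?_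
    by_contra hgy
    exact hne (Subtype.ext (e.injOn (hVs (hg hgy)) (hVs hy₀) y.2.1))
  · rw [indicator_of_notMem hx]
    refine (tsum_congr fun y ↦ ?_).trans tsum_zero
    by_contra hgy
    exact hx ⟨y, hg hgy, y.2.1⟩

end OpenPartialHomeomorph

/-- The Ruelle transformation `L_{-βF}` of the map `σ` defined on `U`. -/
noncomputable def ruelleTransform {X : Type*} (σ : X → X) (U : Set X) (F : X → ℝ) (β : ℝ)
    (f : X → ℝ) (x : X) : ℝ :=
  ∑' y : ↥(σ ⁻¹' {x} ∩ U), Real.exp (-β * F y) * f y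

section Ruelle

variable {X : Type*} [TopologicalSpace X] [MeasurableSpace X] [BorelSpace X]

theorem setIntegral_image_comp_symm_eq_setIntegral_mul_exp {U V : Set X} {F : X → ℝ} {β : ℝ}
    {μ : Measure X} (e : OpenPartialHomeomorph X X)
    (hμ : ∀ f : X → ℝ, Continuous f → HasCompactSupport f → tsupport f ⊆ U →
      ∫ x, ruelleTransform e U F β f x ∂μ = ∫ x in U, f x ∂μ)
    (hV : IsOpen V) (hVs : V ⊆ e.source) (hVU : V ⊆ U) (hFV : ContinuousOn F V) {h : X → ℝ}
    (hh : Continuous h) (hhc : HasCompactSupport h) (hhV : tsupport h ⊆ V) :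
    ∫ x in e '' V, h (e.symm x) ∂μ = ∫ x in V, h x * Real.exp (β * F x) ∂μ := by
  set f : X → ℝ := fun x ↦ h x * Real.exp (β * F x)
  have hfh : tsupport f ⊆ tsupport h := tsupport_mul_subset_left
  have hf : Continuous f := continuous_of_tsupport fun x hx ↦
    hh.continuousAt.mul (Real.continuous_exp.continuousAt.comp
      (continuousAt_const.mul (hFV.continuousAt (hV.mem_nhds (hhV (hfh hx))))))
  have hf0 : ∀ x ∉ V, f x = 0 := fun x hx ↦
    image_eq_zero_of_notMem_tsupport fun hxf ↦ hx (hhV (hfh hxf))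
  have hLf : ∀ x, ruelleTransform e U F β f x = (e '' V).indicator (h ∘ e.symm) x := fun x ↦ by
    rw [← e.tsum_preimage_inter_eq_indicator hVs hVU ((subset_tsupport h).trans hhV)]
    refine tsum_congr fun y ↦ ?_
    change Real.exp (-β * F y) * (h y * Real.exp (β * F y)) = h y
    rw [neg_mul, Real.exp_neg, mul_left_comm, inv_mul_cancel₀ (Real.exp_pos _).ne', mul_one]
  calc ∫ x in e '' V, h (e.symm x) ∂μ = ∫ x, ruelleTransform e U F β f x ∂μ := by
        rw [funext hLf, integral_indicator (e.measurableSet_image hV.measurableSet hVs)]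
        rfl
    _ = ∫ x in V, f x ∂μ := by
        rw [hμ f hf hhc.mul_right (hfh.trans (hhV.trans hVU)),
          setIntegral_eq_integral_of_forall_compl_eq_zero fun x hx ↦ hf0 x (mt (@hVU x) hx),
          setIntegral_eq_integral_of_forall_compl_eq_zero hf0]

theorem map_symm_restrict_image_eq_withDensity [LocallyCompactSpace X] [T2Space X]
    [SecondCountableTopology X] {U V K : Set X} {F : X → ℝ} {β : ℝ} {μ : Measure X} [IsFiniteMeasure μ] (e : OpenPartialHomeomorph X X)
    (hμ : ∀ f : X → ℝ, Continuous f → HasCompactSupport f → tsupport f ⊆ U →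
      ∫ x, ruelleTransform e U F β f x ∂μ = ∫ x in U, f x ∂μ)
    (hV : IsOpen V) (hVs : V ⊆ e.source) (hVU : V ⊆ U) (hK : IsCompact K) (hVK : V ⊆ K)
    (hFK : ContinuousOn F K) :
    (μ.restrict (e '' V)).map e.symm =
      (μ.restrict V).withDensity fun x ↦ ENNReal.ofReal (Real.exp (β * F x)) := by
  set D : X → ℝ := fun x ↦ Real.exp (β * F x)
  have hD : ContinuousOn D K := Real.continuous_exp.comp_continuousOn (hFK.const_smul β)
  have hsymm := e.aemeasurable_symm_restrict_image μ hV.measurableSet hVs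
  have hDm : AEMeasurable (fun x ↦ ENNReal.ofReal (D x)) (μ.restrict V) :=
    (ENNReal.continuous_ofReal.comp_continuousOn (hD.mono hVK)).aemeasurable hV.measurableSet
  have : IsFiniteMeasure ((μ.restrict V).withDensity fun x ↦ ENNReal.ofReal (D x)) :=
    isFiniteMeasure_withDensity_ofReal ((hD.integrableOn_compact hK).mono_set hVK).2
  refine Measure.ext_of_integral_eq_of_tsupport_subset hV ?_ ?_ fun h hh hhc hhV ↦ ?_
  · rw [Measure.map_apply_of_aemeasurable hsymm hV.measurableSet.compl,
      Measure.restrict_apply' (e.measurableSet_image hV.measurableSet hVs)]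
    refine measure_mono_null ?_ measure_empty
    rintro _ ⟨hx, y, hy, rfl⟩
    exact hx ((e.left_inv (hVs hy)).symm ▸ hy)
  · exact withDensity_absolutelyContinuous _ _ (mem_ae_iff.1 (ae_restrict_mem hV.measurableSet))
  rw [integral_map hsymm hh.aestronglyMeasurable,
    setIntegral_image_comp_symm_eq_setIntegral_mul_exp e hμ hV hVs hVU (hFK.mono hVK) hh hhc hhV,
    integral_withDensity_eq_integral_toReal_smul₀ hDm (ae_of_all _ fun _ ↦ ENNReal.ofReal_lt_top)]
  refine integral_congr_ae (ae_of_all _ fun x ↦ ?_)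
  change h x * D x = (ENNReal.ofReal (D x)).toReal * h x
  rw [ENNReal.toReal_ofReal (Real.exp_pos _).le, mul_comm]

end Ruelle

theorem stmt7_general {X : Type*} [TopologicalSpace X] [LocallyCompactSpace X] [T2Space X]
    [SecondCountableTopology X] [MeasurableSpace X] [BorelSpace X]
    (U : Set X) (hU : IsOpen U) (σ : X → X) (hσ : IsLocalHomeomorphOn σ U)
    (F : X → ℝ) (hF : ContinuousOn F U) (β : ℝ)
    (μ : Measure X) (hfin : IsFiniteMeasure μ)
    (hRuelle : ∀ f : X → ℝ, Continuous f → HasCompactSupport f → tsupport f ⊆ U →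
      ∫ x, (∑' y : ↥(σ ⁻¹' {x} ∩ U), Real.exp (-β * F y) * f y) ∂μ
        = ∫ x in U, f x ∂μ) :
    ∀ A : Set X, A ⊆ U → MeasurableSet A → Set.InjOn σ A →
      μ (σ '' A) = ∫⁻ x in A, ENNReal.ofReal (Real.exp (β * F x)) ∂μ := by
  intro A hAU hA hσA
  rw [← withDensity_apply _ hA]
  refine measure_image_eq_of_locally_eq hA hσA fun x hx ↦ ?_
  obtain ⟨e, hxe, rfl⟩ := hσ x (hAU hx)
  obtain ⟨K, hK, hxK, hKe⟩ := exists_compact_subset (e.open_source.inter hU) ⟨hxe, hAU hx⟩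
  have hKs : interior K ⊆ e.source := interior_subset.trans (hKe.trans inter_subset_left)
  have hKU : K ⊆ U := hKe.trans inter_subset_right
  refine ⟨interior K, isOpen_interior, hxK, fun B hBK hB ↦
    ⟨e.measurableSet_image hB (hBK.trans hKs), ?_⟩⟩
  rw [← e.map_symm_restrict_image_apply μ isOpen_interior.measurableSet hKs hB hBK,
    map_symm_restrict_image_eq_withDensity e hRuelle isOpen_interior hKs
      (interior_subset.trans hKU) hK interior_subset (hF.mono hKU),
    withDensity_apply _ hB, withDensity_apply _ hB, Measure.restrict_restrict hB,
    inter_eq_left.2 hBK]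

/-- If a finite Borel measure `μ` is an eigenmeasure for the Ruelle transformation
`L_{-βF}`, i.e. `∫_X ∑_{σ(y)=x, y ∈ U} e^{-βF(y)} f(y) dμ(x) = ∫_U f dμ` for all
continuous compactly supported `f` with support in `U`, then `μ` is Denker–Urbański
conformal: `μ(σ(A)) = ∫⁻_A e^{βF} dμ` for every Borel `A ⊆ U` on which `σ` is
injective. -/
theorem stmt7 {X : Type*} [TopologicalSpace X] [LocallyCompactSpace X] [T2Space X]
    [SecondCountableTopology X] [MeasurableSpace X] [BorelSpace X]
    (U : Set X) (hU : IsOpen U) (σ : X → X) (hσ : IsLocalHomeomorphOn σ U)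
    (hfib : ∀ x : X, (σ ⁻¹' {x} ∩ U).Finite)
    (F : X → ℝ) (hF : ContinuousOn F U) (β : ℝ) (hβ : 0 < β)
    (μ : Measure X) (hfin : IsFiniteMeasure μ)
    (hRuelle : ∀ f : X → ℝ, Continuous f → HasCompactSupport f → tsupport f ⊆ U →
      ∫ x, (∑' y : ↥(σ ⁻¹' {x} ∩ U), Real.exp (-β * F y) * f y) ∂μ
        = ∫ x in U, f x ∂μ) :
    ∀ A : Set X, A ⊆ U → MeasurableSet A → Set.InjOn σ A →
      μ (σ '' A) = ∫⁻ x in A, ENNReal.ofReal (Real.exp (β * F x)) ∂μ :=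
  stmt7_general U hU σ hσ F hF β μ hfin hRuelle
end

section
/- For the renewal shift, let f : ℕ → ℝ with f(s) ≥ M > 0 for all s, and β > log 2 / M. Then the series Z(β) := 1 + ∑_{ω ∈ R, ω ≠ ∅} exp(−β ∑_{j=0}^{|ω|−1} f(ω_j)) converges; consequently setting c_∅ = 1/Z(β) and c_ω = c_∅ exp(−β ∑_j f(ω_j)) defines the unique probability vector (c_ω)_{ω ∈ R} with c_ω e^{β∑_j f(ω_j)} = c_∅ and ∑_{ω ∈ R} c_ω = 1. -/
/-- Renewal shift transition matrix. -/
def RenewalA (t s : ℕ) : Prop := 1 ≤ s ∧ (t = 1 ∨ t = s + 1)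

/-- `w ∈ R`: the empty word, or a finite admissible word ending in `1`. -/
def IsR (w : List ℕ) : Prop :=
  w = [] ∨ (List.Chain' RenewalA w ∧ (∀ a ∈ w, 1 ≤ a) ∧ w.getLast? = some 1)

/-- Reconstruction: an admissible word ending in 1 is determined by the
positions of its letters equal to 1. -/
lemma renewal_inj : ∀ (w w' : List ℕ), List.Chain' RenewalA w → w.getLast? = some 1 →
    List.Chain' RenewalA w' → w'.getLast? = some 1 →
    w.map (· == 1) = w'.map (· == 1) → w = w' := by
  intro w
  induction w with
  | nil =>
    intro w' _ _ _ _ hm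
    cases w' with
    | nil => rfl
    | cons a t => simp at hm
  | cons a t ih =>
    intro w' hc hl hc' hl' hm
    cases w' with
    | nil => simp at hm
    | cons a' t' =>
      simp only [List.map_cons, List.cons.injEq] at hm
      obtain ⟨hab, htm⟩ := hm
      cases t with
      | nil =>
        cases t' with
        | cons b' u' => simp at htm
        | nil =>
          simp [List.getLast?] at hl hl'
          simp [hl, hl']
      | cons b u =>
        cases t' with
        | nil => simp at htm
        | cons b' u' =>
          have hc1 := (List.isChain_cons_cons).1 hc
          have hc1' := (List.isChain_cons_cons).1 hc'
          have hlt : (b :: u).getLast? = some 1 := by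
            rw [← hl]; simp [List.getLast?_cons_cons]
          have hlt' : (b' :: u').getLast? = some 1 := by
            rw [← hl']; simp [List.getLast?_cons_cons]
          have hteq : (b :: u) = (b' :: u') := ih _ hc1.2 hlt hc1'.2 hlt' htm
          rw [hteq]
          congr 1
          by_cases h1 : a = 1
          · have : a' = 1 := by
              rw [h1] at hab; simpa using hab.symm
            rw [h1, this]
          · have h1' : a' ≠ 1 := by
              intro h; rw [h] at hab; simp [h1] at hab
            have ha : a = b + 1 := hc1.1.2.resolve_left h1
            have ha' : a' = b' + 1 := hc1'.1.2.resolve_left h1'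
            have : b = b' := (List.cons.injEq _ _ _ _ ▸ hteq).1
            rw [ha, ha', this]

lemma summable_pow_len {r : ℝ} (hr : 0 ≤ r) (h2r : 2 * r < 1) :
    Summable (fun l : List Bool => r ^ l.length) := by
  have hsig : Summable (fun p : Σ n, Fin n → Bool => r ^ p.1) := by
    apply (summable_sigma_of_nonneg (fun _ => pow_nonneg hr _)).2
    refine ⟨fun n => Summable.of_finite, ?_⟩
    have : ∀ n : ℕ, (∑' _ : Fin n → Bool, r ^ n) = (2 * r) ^ n := by
      intro n
      rw [tsum_fintype, Finset.sum_const, Finset.card_univ, Fintype.card_fun]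
      simp [mul_pow, nsmul_eq_mul]
    simp only [this]
    exact summable_geometric_of_lt_one (by positivity) h2r
  exact ((List.equivSigmaTuple (α := Bool)).summable_iff
    (f := fun p : Σ n, Fin n → Bool => r ^ p.1)).2 hsig

/-- If `f ≥ M > 0` and `β > log 2 / M`, then
`Z(β) = 1 + ∑_{ω ∈ R, ω ≠ ∅} e^{-β ∑_j f(ω_j)}` converges, and there is a unique
probability vector `(c_ω)_{ω ∈ R}` with `c_ω e^{β ∑_j f(ω_j)} = c_∅` and
`∑_ω c_ω = 1` (given by `c_∅ = 1/Z(β)`, `c_ω = c_∅ e^{-β ∑_j f(ω_j)}`). -/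
theorem stmt15 (f : ℕ → ℝ) (M : ℝ) (hM : 0 < M) (hf : ∀ s, M ≤ f s)
    (β : ℝ) (hβ : Real.log 2 / M < β) :
    Summable (fun w : {w : List ℕ // IsR w ∧ w ≠ []} =>
      Real.exp (-β * (w.1.map f).sum)) ∧
    (∃! c : {w : List ℕ // IsR w} → ℝ,
      (∀ w, 0 ≤ c w) ∧
      (∀ w : {w : List ℕ // IsR w},
        c w * Real.exp (β * (w.1.map f).sum) = c ⟨[], Or.inl rfl⟩) ∧
      (∑' w, c w) = 1) := by
  have hlog2 : (0:ℝ) < Real.log 2 := Real.log_pos (by norm_num)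
  have hβ0 : 0 < β := lt_trans (div_pos hlog2 hM) hβ
  have hβM : Real.log 2 < β * M := by
    rw [div_lt_iff₀ hM] at hβ; linarith
  set r : ℝ := Real.exp (-(β * M)) with hr_def
  have hr0 : 0 ≤ r := Real.exp_nonneg _
  have h2r : 2 * r < 1 := by
    have : r < 1 / 2 := by
      rw [hr_def]
      calc Real.exp (-(β * M)) < Real.exp (-(Real.log 2)) :=
            Real.exp_lt_exp.2 (by linarith)
        _ = 1 / 2 := by
            rw [Real.exp_neg, Real.exp_log (by norm_num)]; norm_num
    linarith
  -- the bound: for any list with all entries, exp(-β sum map f) ≤ r ^ len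
  have hbound : ∀ w : List ℕ, Real.exp (-β * (w.map f).sum) ≤ r ^ w.length := by
    intro w
    have hsum : (M : ℝ) * w.length ≤ (w.map f).sum := by
      induction w with
      | nil => simp
      | cons a t iht =>
        simp only [List.map_cons, List.sum_cons, List.length_cons]
        push_cast
        have := hf a
        nlinarith
    have : -β * (w.map f).sum ≤ (w.length : ℝ) * (-(β * M)) := by
      have := mul_le_mul_of_nonneg_left hsum (le_of_lt hβ0)
      ring_nf
      nlinarith
    calc Real.exp (-β * (w.map f).sum) ≤ Real.exp ((w.length : ℝ) * (-(β * M))) :=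
          Real.exp_le_exp.2 this
      _ = r ^ w.length := by rw [← Real.exp_nat_mul]
  -- injectivity into List Bool
  have hinjS : Function.Injective
      (fun w : {w : List ℕ // IsR w} => w.1.map (· == 1)) := by
    rintro ⟨w, hw⟩ ⟨w', hw'⟩ h
    simp only at h
    have : w = w' := by
      rcases hw with hw | hw
      · rcases hw' with hw' | hw'
        · rw [hw, hw']
        · subst hw
          cases w' with
          | nil => rfl
          | cons a t => simp at h
      · rcases hw' with hw' | hw'
        · subst hw'
          cases w with
          | nil => rfl
          | cons a t => simp at h
        · exact renewal_inj w w' hw.1 hw.2.2 hw'.1 hw'.2.2 h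
    simpa using this
  -- summability over all of R
  have hS : Summable (fun w : {w : List ℕ // IsR w} =>
      Real.exp (-β * (w.1.map f).sum)) := by
    apply Summable.of_nonneg_of_le (fun w => Real.exp_nonneg _)
      (fun w => by
        calc Real.exp (-β * (w.1.map f).sum) ≤ r ^ w.1.length := hbound w.1
          _ = r ^ (w.1.map (· == 1)).length := by rw [List.length_map])
    exact ((summable_pow_len hr0 h2r).comp_injective hinjS)
  -- summability over nonempty words
  have hinj2 : Function.Injective
      (fun w : {w : List ℕ // IsR w ∧ w ≠ []} =>
        (⟨w.1, w.2.1⟩ : {w : List ℕ // IsR w})) :=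
    by
    intro a b h
    simp only [Subtype.mk.injEq] at h
    exact Subtype.ext h
  have hfirst : Summable (fun w : {w : List ℕ // IsR w ∧ w ≠ []} =>
      Real.exp (-β * (w.1.map f).sum)) := by
    have h := hS.comp_injective hinj2
    exact h
  refine ⟨hfirst, ?_⟩
  -- setup Z
  set g : {w : List ℕ // IsR w} → ℝ :=
    fun w => Real.exp (-β * (w.1.map f).sum) with hg_def
  set Z : ℝ := ∑' w, g w with hZ_def
  have hZ1 : 1 ≤ Z := by
    have h := Summable.le_tsum hS (⟨[], Or.inl rfl⟩ : {w : List ℕ // IsR w})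
      (fun _ _ => Real.exp_nonneg _)
    have h0 : g ⟨[], Or.inl rfl⟩ = 1 := by simp [hg_def]
    rw [h0] at h
    exact h
  have hZpos : 0 < Z := lt_of_lt_of_le one_pos hZ1
  refine ⟨fun w => Z⁻¹ * g w, ⟨?_, ?_, ?_⟩, ?_⟩
  · intro w
    exact mul_nonneg (inv_nonneg.2 hZpos.le) (Real.exp_nonneg _)
  · intro w
    simp only [hg_def]
    rw [mul_assoc, ← Real.exp_add]
    simp
  · rw [tsum_mul_left, ← hZ_def, inv_mul_cancel₀ hZpos.ne']
  · rintro c ⟨hc0, hce, hcs⟩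
    funext w
    have hkey : ∀ w : {w : List ℕ // IsR w},
        c w = c ⟨[], Or.inl rfl⟩ * g w := by
      intro w
      have hz : β * ((w.1.map f).sum) + -β * ((w.1.map f).sum) = 0 := by ring
      rw [hg_def, ← hce w, mul_assoc, ← Real.exp_add, hz, Real.exp_zero, mul_one]
    have hsum : (∑' w, c w) = c ⟨[], Or.inl rfl⟩ * Z := by
      rw [hZ_def, ← tsum_mul_left]
      exact tsum_congr hkey
    rw [hcs] at hsum
    have hcempty : c ⟨[], Or.inl rfl⟩ = Z⁻¹ := by
      field_simp at hsum ⊢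
      linarith [hsum]
    rw [hkey w, hcempty]
end

section
/- For the renewal shift, let f : ℕ → ℝ be bounded with 0 ≤ f(s) ≤ ‖f‖_∞ for all s, and let 0 < β < log 2 / ‖f‖_∞. Then the series ∑_{ω ∈ R, ω ≠ ∅} exp(−β ∑_{j=0}^{|ω|−1} f(ω_j)) diverges; consequently there is no probability vector (c_ω)_{ω∈R} with c_∅ > 0 satisfying c_ω e^{β∑_j f(ω_j)} = c_∅ and ∑_ω c_ω = 1. -/
/-!
Every word `b₁ ⋯ bₖ` over `Bool` encodes a word of length `k + 1` in `R ∖ {∅}`: read from the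
right, the encoded word ends in `1`, and each earlier letter is `1` if `bᵢ` is true and one more
than its successor otherwise. Hence `R ∖ {∅}` has at least `2 ^ k` words of length `k + 1`, each
of weight `exp (-β ∑ f) ≥ a ^ (k + 1)` with `a = exp (-β C)`. When `β C ≤ log 2` we have
`2 a ≥ 1`, so the weights of the words of each length sum to at least `a`, and the series diverges.
A summable `c` with `c ω exp (β ∑ f) = c ∅` restricts on `R ∖ {∅}` to `c ∅` times its terms.
-/

open Real

theorem not_summable_pow_length {a : ℝ} (ha : 1 ≤ 2 * a) :
    ¬ Summable fun bs : List Bool => a ^ bs.length := by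
  intro h
  have hfibre (k : ℕ) : ∑' bs : Fin k → Bool, a ^ (List.ofFn bs).length = (2 * a) ^ k := by
    simp [mul_pow]
  have hgeom := (List.equivSigmaTuple.symm.summable_iff.2 h).sigma
  simp only [Function.comp_apply, List.equivSigmaTuple_symm_apply, hfibre] at hgeom
  rw [summable_geometric_iff_norm_lt_one, Real.norm_of_nonneg (by linarith)] at hgeom
  linarith

namespace RenewalShift

def encode : List Bool → List ℕ
  | [] => [1]
  | b :: bs => (if b then 1 else (encode bs).headI + 1) :: encode bs

theorem encode_ne_nil (bs : List Bool) : encode bs ≠ [] := by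
  cases bs <;> simp [encode]

theorem length_encode (bs : List Bool) : (encode bs).length = bs.length + 1 := by
  induction bs with
  | nil => rfl
  | cons b bs ih => simp [encode, ih]

theorem one_le_headI_encode (bs : List Bool) : 1 ≤ (encode bs).headI := by
  cases bs with
  | nil => simp [encode]
  | cons b bs => cases b <;> simp [encode]

theorem encode_eq_headI_cons (bs : List Bool) : ∃ t, encode bs = (encode bs).headI :: t := by
  obtain ⟨x, t, hxt⟩ := List.exists_cons_of_ne_nil (encode_ne_nil bs)
  exact ⟨t, by simp [hxt]⟩

theorem isChain_encode (bs : List Bool) : List.IsChain RenewalA (encode bs) := by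
  induction bs with
  | nil => simp [encode]
  | cons b bs ih =>
    obtain ⟨t, ht⟩ := encode_eq_headI_cons bs
    rw [encode, ht, List.isChain_cons_cons, ← ht]
    exact ⟨⟨one_le_headI_encode bs, by cases b <;> simp⟩, ih⟩

theorem one_le_of_mem_encode {bs : List Bool} {n : ℕ} (hn : n ∈ encode bs) : 1 ≤ n := by
  induction bs with
  | nil => simp_all [encode]
  | cons b bs ih =>
    rcases List.mem_cons.1 hn with rfl | hn
    · split <;> omega
    · exact ih hn

theorem getLast?_encode (bs : List Bool) : (encode bs).getLast? = some 1 := by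
  induction bs with
  | nil => rfl
  | cons b bs ih =>
    obtain ⟨t, ht⟩ := encode_eq_headI_cons bs
    rw [encode, ht, List.getLast?_cons_cons, ← ht, ih]

theorem isR_encode (bs : List Bool) : IsR (encode bs) :=
  Or.inr ⟨isChain_encode bs, fun _ => one_le_of_mem_encode, getLast?_encode bs⟩

theorem encode_injective : Function.Injective encode := by
  intro bs
  induction bs with
  | nil =>
    rintro (_ | ⟨c, cs⟩) h
    · rfl
    · simpa [length_encode] using congrArg List.length h
  | cons b bs ih =>
    rintro (_ | ⟨c, cs⟩) h
    · simpa [length_encode] using congrArg List.length h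
    · obtain ⟨hhead, htail⟩ := List.cons_eq_cons.1 h
      obtain rfl := ih htail
      have := one_le_headI_encode bs
      cases b <;> cases c <;> grind

theorem one_le_two_mul_exp_neg {β C : ℝ} (hβC : β * C ≤ log 2) : 1 ≤ 2 * exp (-(β * C)) := by
  have : exp (-log 2) ≤ exp (-(β * C)) := exp_le_exp.2 (by linarith)
  rw [exp_neg, exp_log two_pos] at this
  linarith

theorem pow_length_le_exp_neg_mul_sum {f : ℕ → ℝ} {C β : ℝ} (hfC : ∀ s, f s ≤ C) (hβ : 0 ≤ β)
    (w : List ℕ) : exp (-(β * C)) ^ w.length ≤ exp (-β * (w.map f).sum) := by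
  have hsum : (w.map f).sum ≤ w.length * C := by
    simpa using List.sum_le_card_nsmul (w.map f) C (by simpa using fun s _ => hfC s)
  rw [← exp_nat_mul, exp_le_exp]
  nlinarith

theorem not_summable_exp_neg_mul_sum {f : ℕ → ℝ} {C β : ℝ} (hfC : ∀ s, f s ≤ C) (hβ : 0 ≤ β)
    (hβC : β * C ≤ log 2) :
    ¬ Summable fun w : {w : List ℕ // IsR w ∧ w ≠ []} => exp (-β * (w.1.map f).sum) := by
  intro h
  have henc : Function.Injective fun bs => (⟨encode bs, isR_encode bs, encode_ne_nil bs⟩ :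
      {w : List ℕ // IsR w ∧ w ≠ []}) :=
    fun _ _ hbs => encode_injective (congrArg Subtype.val hbs)
  have hle (bs : List Bool) :
      exp (-(β * C)) * exp (-(β * C)) ^ bs.length ≤ exp (-β * ((encode bs).map f).sum) := by
    rw [← pow_succ', ← length_encode]
    exact pow_length_le_exp_neg_mul_sum hfC hβ (encode bs)
  refine not_summable_pow_length (one_le_two_mul_exp_neg hβC) ?_
  refine (summable_mul_left_iff (exp_pos (-(β * C))).ne').1 ?_
  exact (h.comp_injective henc).of_nonneg_of_le (fun _ => by positivity) hle

end RenewalShift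

open RenewalShift in
theorem stmt16_general (f : ℕ → ℝ) (C : ℝ) (hC : 0 < C)
    (hfC : ∀ s, f s ≤ C) (β : ℝ) (hβ0 : 0 < β) (hβ : β < Real.log 2 / C) :
    ¬ Summable (fun w : {w : List ℕ // IsR w ∧ w ≠ []} =>
      Real.exp (-β * (w.1.map f).sum)) ∧
    ¬ ∃ c : {w : List ℕ // IsR w} → ℝ,
      (∀ w, 0 ≤ c w) ∧ 0 < c ⟨[], Or.inl rfl⟩ ∧
      (∀ w : {w : List ℕ // IsR w},
        c w * Real.exp (β * (w.1.map f).sum) = c ⟨[], Or.inl rfl⟩) ∧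
      (∑' w, c w) = 1 := by
  have hdiv := not_summable_exp_neg_mul_sum hfC hβ0.le ((lt_div_iff₀ hC).1 hβ).le
  refine ⟨hdiv, ?_⟩
  rintro ⟨c, -, hc₀, hc, hsum⟩
  have hcs : Summable c := by
    by_contra h
    simp [tsum_eq_zero_of_not_summable h] at hsum
  have hrestrict : Summable fun w : {w : List ℕ // IsR w ∧ w ≠ []} => c ⟨w.1, w.2.1⟩ :=
    hcs.comp_injective fun _ _ h => Subtype.ext (Subtype.mk.inj h)
  have hcw (w : {w : List ℕ // IsR w}) :
      c w = c ⟨[], Or.inl rfl⟩ * exp (-β * (w.1.map f).sum) := by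
    rw [← hc w, neg_mul, exp_neg, mul_inv_cancel_right₀ (exp_pos _).ne']
  exact hdiv ((summable_mul_left_iff hc₀.ne').1 (hrestrict.congr fun w => hcw _))

/-- If `0 ≤ f ≤ C` (`C = ‖f‖_∞`) and `0 < β < log 2 / C`, then the series
`∑_{ω ∈ R, ω ≠ ∅} e^{-β ∑_j f(ω_j)}` diverges; consequently there is no probability
vector `(c_ω)_{ω ∈ R}` with `c_∅ > 0`, `c_ω e^{β ∑_j f(ω_j)} = c_∅` and
`∑_ω c_ω = 1`. -/
theorem stmt16 (f : ℕ → ℝ) (C : ℝ) (hC : 0 < C) (hf0 : ∀ s, 0 ≤ f s)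
    (hfC : ∀ s, f s ≤ C) (β : ℝ) (hβ0 : 0 < β) (hβ : β < Real.log 2 / C) :
    ¬ Summable (fun w : {w : List ℕ // IsR w ∧ w ≠ []} =>
      Real.exp (-β * (w.1.map f).sum)) ∧
    ¬ ∃ c : {w : List ℕ // IsR w} → ℝ,
      (∀ w, 0 ≤ c w) ∧ 0 < c ⟨[], Or.inl rfl⟩ ∧
      (∀ w : {w : List ℕ // IsR w},
        c w * Real.exp (β * (w.1.map f).sum) = c ⟨[], Or.inl rfl⟩) ∧
      (∑' w, c w) = 1 :=
  stmt16_general f C hC hfC β hβ0 hβ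
end
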